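/- Let z ∈ ℂ lie on the circle |z − 2πki| = r where k is a positive integer and 1/4 ≤ r ≤ 1/2. Then |e^z − 1| > r/2. -/

import Mathlib

open Complex Real

theorem exp_sub_one_lower_bound_on_circle
    (k : ℤ) (hk : 1 ≤ k) (r : ℝ) (hr1 : 1/4 ≤ r) (hr2 : r ≤ 1/2)
    (z : ℂ) (hz : ‖z - 2 * π * k * Complex.I‖ = r) :
    r / 2 < ‖Complex.exp z - 1‖ := by
  set w : ℂ := z - 2 * π * k * Complex.I with hw
  have hez : Complex.exp z = Complex.exp w := by
    have h1 : Complex.exp ((k : ℂ) * (2 * π * Complex.I)) = 1 :=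
      Complex.exp_int_mul_two_pi_mul_I k
    have : z = w + (k : ℂ) * (2 * π * Complex.I) := by rw [hw]; ring
    rw [this, Complex.exp_add, h1, mul_one]
  have habs : ‖w‖ = r := hz
  have hle1 : ‖w‖ ≤ 1 := by rw [habs]; linarith
  have hb := Complex.exp_bound hle1 (n := 2) (by norm_num)
  have hsum : (∑ m ∈ Finset.range 2, w ^ m / m.factorial) = 1 + w := by
    simp [Finset.sum_range_succ]
  rw [hsum, habs] at hb
  have hb' : ‖Complex.exp w - (1 + w)‖ ≤ 3/4 * r^2 := by
    convert hb using 1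
    norm_num [Nat.factorial]
    ring
  have htri : ‖w‖ - ‖Complex.exp w - (1 + w)‖
      ≤ ‖Complex.exp w - 1‖ := by
    have := norm_sub_norm_le w (w - (Complex.exp w - 1))
    have h2 : w - (w - (Complex.exp w - 1)) = Complex.exp w - 1 := by ring
    have h3 : ‖w - (Complex.exp w - 1)‖ = ‖Complex.exp w - (1 + w)‖ := by
      rw [← norm_neg]; ring_nf
    rw [h2, h3] at this
    linarith
  rw [habs] at htri
  rw [hez]
  nlinarith [sq_nonneg r]
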